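/- Let G be a finite group whose components (subnormal quasisimple subgroups) X_1, …, X_r are pairwise distinct, and let D ≤ G be an abelian p-subgroup. Suppose that for each i, D ∩ Z(X_i) is properly contained in D ∩ X_i. If x ∈ C_G(D) and conjugation by x permutes the set {X_1,…,X_r}, with X_i^x ≠ X_i implying X_i ∩ X_i^x ≤ Z(X_i), then x normalizes every X_i. -/

import Mathlib

namespace Subgroup

variable {G : Type*} [Group G]

theorem inf_le_map_conj_of_mem_centralizer {D : Subgroup G} {x : G}
    (hx : x ∈ centralizer (D : Set G)) (H : Subgroup G) :
    D ⊓ H ≤ H.map (MulAut.conj x).toMonoidHom := by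
  rintro d ⟨hdD, hdH⟩
  have hfix : x * d * x⁻¹ = d := by
    rw [← mem_centralizer_iff.mp hx d hdD, mul_inv_cancel_right]
  exact ⟨d, hdH, hfix⟩

/-- If `D ∩ H ≤ K`, then `D ∩ H ≤ H ∩ K`, which lies in `C(H)` when `H ≠ K`; so `D ∩ H`
would collapse into `D ∩ Z(H)`. -/
theorem eq_of_inf_center_lt_of_inf_le {D H K : Subgroup G}
    (hproper : D ⊓ (centralizer (H : Set G) ⊓ H) < D ⊓ H) (hDK : D ⊓ H ≤ K)
    (hint : H ≠ K → H ⊓ K ≤ centralizer (H : Set G)) : H = K := by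
  by_contra hHK
  exact hproper.not_ge fun d hd => ⟨hd.1, hint hHK ⟨hd.2, hDK hd⟩, hd.2⟩

end Subgroup

theorem stmt12_general {G : Type*} [Group G] {r : ℕ} (X : Fin r → Subgroup G)
    (D : Subgroup G)
    (hproper : ∀ i, D ⊓ (Subgroup.centralizer (X i : Set G) ⊓ X i) < D ⊓ X i)
    (x : G) (hx : x ∈ Subgroup.centralizer (D : Set G))
    (hperm : ∀ i, ∃ j, (X i).map (MulAut.conj x).toMonoidHom = X j)
    (hint : ∀ i j, X i ≠ X j → X i ⊓ X j ≤ Subgroup.centralizer (X i : Set G)) :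
    ∀ i, (X i).map (MulAut.conj x).toMonoidHom = X i := by
  intro i
  obtain ⟨j, hj⟩ := hperm i
  have hDX : D ⊓ X i ≤ X j := hj ▸ Subgroup.inf_le_map_conj_of_mem_centralizer hx (X i)
  rw [hj, Subgroup.eq_of_inf_center_lt_of_inf_le (hproper i) hDX (hint i j)]

/-- Component-fixing argument: let `X₁, …, X_r` be the (pairwise distinct) components of `G`,
`D` an abelian `p`-subgroup with `D ∩ Z(Xᵢ) < D ∩ Xᵢ` for each `i` (here
`Z(Xᵢ) = C_G(Xᵢ) ∩ Xᵢ`).  If `x ∈ C_G(D)` permutes the components by conjugation, and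
distinct components intersect in their centers, then `x` normalizes every `Xᵢ`. -/
theorem stmt12 {G : Type*} [Group G] {r : ℕ} (X : Fin r → Subgroup G)
    (hdistinct : ∀ i j, i ≠ j → X i ≠ X j)
    (p : ℕ) [Fact p.Prime] (D : Subgroup G) (hD : IsPGroup p D)
    (hDab : IsMulCommutative D)
    (hproper : ∀ i, D ⊓ (Subgroup.centralizer (X i : Set G) ⊓ X i) < D ⊓ X i)
    (x : G) (hx : x ∈ Subgroup.centralizer (D : Set G))
    (hperm : ∀ i, ∃ j, (X i).map (MulAut.conj x).toMonoidHom = X j)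
    (hint : ∀ i j, X i ≠ X j → X i ⊓ X j ≤ Subgroup.centralizer (X i : Set G)) :
    ∀ i, (X i).map (MulAut.conj x).toMonoidHom = X i :=
  stmt12_general X D hproper x hx hperm hint
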